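/- arXiv:2506.06492 — 2 statements merged into one kernel-verified Lean document; each statement's English description precedes it below -/
import Mathlib

section
/- Let φ be a flow on ℝ^d, let N ⊆ ℝ^d be an attracting neighborhood for φ with attractor A := ω(N), and let x ∈ ℝ^d be a point whose forward orbit closure, closure({φ(t,x) : t ≥ 0}), is compact. Then ω(x) ⊆ A if and only if there exists an attracting neighborhood N' for φ with ω(N') = A and x ∈ N'. (That is, x lies in the basin of attraction of A exactly when ω(x) ⊆ A.) -/
open Set

/-- A flow on `ℝ^d`: a continuous map `φ : ℝ × ℝ^d → ℝ^d` with `φ 0 x = x`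
and `φ t (φ s x) = φ (t+s) x`. -/
def IsFlow {d : ℕ} (φ : ℝ → EuclideanSpace ℝ (Fin d) → EuclideanSpace ℝ (Fin d)) : Prop :=
  Continuous (Function.uncurry φ) ∧ (∀ x, φ 0 x = x) ∧
    ∀ t s x, φ t (φ s x) = φ (t + s) x

/-- `N` is an attracting neighborhood for the flow `φ`: `N` is compact and there is
`τ > 0` such that `φ(t,N) ⊆ interior N` for all `t ≥ τ`. -/
def AttractingNbhd {d : ℕ} (φ : ℝ → EuclideanSpace ℝ (Fin d) → EuclideanSpace ℝ (Fin d))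
    (N : Set (EuclideanSpace ℝ (Fin d))) : Prop :=
  IsCompact N ∧ ∃ τ : ℝ, 0 < τ ∧ ∀ t : ℝ, τ ≤ t → (φ t) '' N ⊆ interior N

/-- The omega-limit set `ω(S) = ⋂_{t>0} closure (⋃_{s ≥ t} φ(s,S))`. -/
def omegaLimitSet {d : ℕ} (φ : ℝ → EuclideanSpace ℝ (Fin d) → EuclideanSpace ℝ (Fin d))
    (S : Set (EuclideanSpace ℝ (Fin d))) : Set (EuclideanSpace ℝ (Fin d)) :=
  ⋂ t ∈ Set.Ioi (0 : ℝ), closure (⋃ s ∈ Set.Ici t, (φ s) '' S)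

lemma omega_mono {d : ℕ} (φ : ℝ → EuclideanSpace ℝ (Fin d) → EuclideanSpace ℝ (Fin d))
    {S S' : Set (EuclideanSpace ℝ (Fin d))} (h : S ⊆ S') :
    omegaLimitSet φ S ⊆ omegaLimitSet φ S' := by
  refine iInter₂_mono fun t ht => closure_mono <| iUnion₂_mono fun s hs => image_mono h

theorem stmt_10 {d : ℕ} (φ : ℝ → EuclideanSpace ℝ (Fin d) → EuclideanSpace ℝ (Fin d))
    (hφ : IsFlow φ) (N : Set (EuclideanSpace ℝ (Fin d))) (hAN : AttractingNbhd φ N)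
    (A : Set (EuclideanSpace ℝ (Fin d))) (hA : A = omegaLimitSet φ N)
    (x : EuclideanSpace ℝ (Fin d))
    (hx : IsCompact (closure ((fun t : ℝ => φ t x) '' Set.Ici (0 : ℝ)))) :
    omegaLimitSet φ {x} ⊆ A ↔
      ∃ N' : Set (EuclideanSpace ℝ (Fin d)),
        AttractingNbhd φ N' ∧ omegaLimitSet φ N' = A ∧ x ∈ N' := by
  obtain ⟨hcont, hzero, hcmp⟩ := hφ
  obtain ⟨hNc, τ, hτ, hattr⟩ := hAN
  have hct : ∀ t, Continuous (φ t) := fun t => by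
    have : Continuous fun y => Function.uncurry φ (t, y) :=
      hcont.comp (Continuous.prodMk_right t)
    exact this
  have hcx : Continuous fun t : ℝ => φ t x := by
    have : Continuous fun t : ℝ => Function.uncurry φ (t, x) :=
      hcont.comp (continuous_id.prodMk continuous_const)
    exact this
  constructor
  · intro hωx
    -- A ⊆ interior N
    have hAint : A ⊆ interior N := by
      have h1 : A ⊆ closure (⋃ s ∈ Set.Ici (2 * τ), (φ s) '' N) := by
        rw [hA]
        exact biInter_subset_of_mem (by simp [mem_Ioi]; linarith)
      have h2 : (⋃ s ∈ Set.Ici (2 * τ), (φ s) '' N) ⊆ (φ τ) '' N := by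
        rintro y ⟨_, ⟨s, rfl⟩, hy⟩
        simp only [mem_iUnion, mem_image] at hy
        obtain ⟨hs, z, hz, rfl⟩ := hy
        have h3 : φ s z = φ τ (φ (s - τ) z) := by
          rw [hcmp]; ring_nf
        rw [h3]
        refine mem_image_of_mem _ ?_
        have : φ (s - τ) z ∈ interior N :=
          hattr (s - τ) (by linarith [mem_Ici.mp hs]) (mem_image_of_mem _ hz)
        exact interior_subset this
      have h4 : IsClosed ((φ τ) '' N) := (hNc.image (hct τ)).isClosed
      calc A ⊆ closure ((φ τ) '' N) := h1.trans (closure_mono h2)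
        _ = (φ τ) '' N := h4.closure_eq
        _ ⊆ interior N := hattr τ le_rfl
    -- eventually the orbit of x is in interior N
    have hev : ∀ᶠ t in Filter.atTop, φ t x ∈ interior N := by
      by_contra hc
      have hfreq : ∃ᶠ t in Filter.atTop, φ t x ∈ (interior N)ᶜ :=
        Filter.not_eventually.mp hc
      set L : Filter ℝ := Filter.atTop ⊓ Filter.principal {t | φ t x ∈ (interior N)ᶜ}
        with hL
      have hLne : L.NeBot := Filter.frequently_iff_neBot.mp hfreq
      set K := closure ((fun t : ℝ => φ t x) '' Set.Ici (0 : ℝ)) with hK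
      set F : Filter (EuclideanSpace ℝ (Fin d)) := Filter.map (fun t : ℝ => φ t x) L
      have hFne : F.NeBot := Filter.map_neBot
      have hatLe : L ≤ Filter.atTop := inf_le_left
      have hFle : F ≤ Filter.principal (K ∩ (interior N)ᶜ) := by
        rw [Filter.le_principal_iff, Filter.mem_map]
        have hmem1 : Set.Ici (0:ℝ) ∈ L := Filter.mem_inf_of_left (Filter.Ici_mem_atTop 0)
        have hmem2 : {t : ℝ | φ t x ∈ (interior N)ᶜ} ∈ L :=
          Filter.mem_inf_of_right (Filter.mem_principal_self _)
        filter_upwards [hmem1, hmem2] with t ht1 ht2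
        exact ⟨subset_closure (mem_image_of_mem _ ht1), ht2⟩
      have hKc : IsCompact (K ∩ (interior N)ᶜ) :=
        hx.inter_right (isClosed_compl_iff.mpr isOpen_interior)
      obtain ⟨y, hy, hcl⟩ := hKc.exists_clusterPt hFle
      have hyω : y ∈ omegaLimitSet φ {x} := by
        refine mem_iInter₂.mpr fun t ht => ?_
        have hS : (⋃ s ∈ Set.Ici t, (φ s) '' {x}) ∈ F := by
          rw [Filter.mem_map]
          have hIci : Set.Ici t ∈ L := Filter.mem_inf_of_left (Filter.Ici_mem_atTop t)
          filter_upwards [hIci] with u hu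
          exact mem_preimage.mpr (mem_biUnion hu (mem_image_of_mem _ rfl))
        rw [mem_closure_iff_clusterPt]
        exact hcl.mono (Filter.le_principal_iff.mpr hS)
      exact hy.2 (hAint (hωx hyω))
    obtain ⟨T0, hT0⟩ := Filter.eventually_atTop.mp hev
    set T := max T0 0 with hTdef
    have hT0' : (0:ℝ) ≤ T := le_max_right _ _
    have hT : ∀ t : ℝ, T ≤ t → φ t x ∈ interior N := fun t ht =>
      hT0 t ((le_max_left _ _).trans ht)
    set seg := (fun u : ℝ => φ u x) '' Set.Icc 0 T with hseg
    refine ⟨N ∪ seg, ⟨hNc.union (isCompact_Icc.image hcx), max τ T, lt_max_of_lt_left hτ, ?_⟩, ?_, Or.inr ⟨0, ⟨le_rfl, hT0'⟩, hzero x⟩⟩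
    · intro t ht
      rintro y ⟨z, hz | hz, rfl⟩
      · exact interior_mono subset_union_left
          (hattr t ((le_max_left _ _).trans ht) (mem_image_of_mem _ hz))
      · obtain ⟨u, hu, rfl⟩ := hz
        have : φ t (φ u x) = φ (t + u) x := hcmp t u x
        rw [this]
        refine interior_mono subset_union_left (hT (t + u) ?_)
        have := (le_max_right τ T).trans ht
        linarith [hu.1]
    · -- ω(N ∪ seg) = A
      apply Set.Subset.antisymm
      · rw [hA]
        intro y hy
        refine mem_iInter₂.mpr fun t ht => ?_
        have ht' : (0:ℝ) < t + T := by
          have := mem_Ioi.mp ht; linarith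
        have hy' := mem_iInter₂.mp hy (t + T) (mem_Ioi.mpr ht')
        refine closure_mono ?_ hy'
        rintro z ⟨_, ⟨s, rfl⟩, hz⟩
        simp only [mem_iUnion, mem_image] at hz
        obtain ⟨hs, w, hw, rfl⟩ := hz
        have hs' : t + T ≤ s := mem_Ici.mp hs
        rcases hw with hw | hw
        · exact mem_biUnion (mem_Ici.mpr (by linarith)) (mem_image_of_mem _ hw)
        · obtain ⟨u, hu, rfl⟩ := hw
          have e1 : φ s (φ u x) = φ (s + u - T) (φ T x) := by
            rw [hcmp, hcmp]; ring_nf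
          refine mem_biUnion (mem_Ici.mpr (show t ≤ s + u - T by linarith [hu.1])) ?_
          exact e1 ▸ mem_image_of_mem _ (interior_subset (hT T le_rfl))
      · rw [hA]; exact omega_mono φ subset_union_left
  · rintro ⟨N', hAN', hωN', hxN'⟩
    rw [← hωN']
    exact omega_mono φ (singleton_subset_iff.mpr hxN')
end

section
/- Let φ be a flow on ℝ^d, let X ⊆ ℝ^d be a nonempty, compact, connected attracting neighborhood for φ, and let N₀, …, N_K ⊆ X with K ≥ 1 be nonempty, mutually disjoint attracting neighborhoods with A_k := ω(N_k). Then ω(X) ≠ ⋃_{k=0}^{K} A_k; that is, there exists x ∈ ω(X) with x ∉ A_k for every k. -/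
open Set

/-- A directed intersection of nonempty compact connected sets in a T2 space is connected. -/
lemma isConnected_iInter_directed {α : Type*} [TopologicalSpace α] [T2Space α]
    {ι : Type*} [Nonempty ι] {E : ι → Set α} (hdir : Directed (· ⊇ ·) E)
    (hne : ∀ i, (E i).Nonempty) (hcomp : ∀ i, IsCompact (E i))
    (hconn : ∀ i, IsConnected (E i)) : IsConnected (⋂ i, E i) := by
  have hEcl : ∀ i, IsClosed (E i) := fun i => (hcomp i).isClosed
  have hCne : (⋂ i, E i).Nonempty :=
    IsCompact.nonempty_iInter_of_directed_nonempty_isCompact_isClosed E hdir hne hcomp hEcl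
  have hCcl : IsClosed (⋂ i, E i) := isClosed_iInter hEcl
  obtain ⟨i₀⟩ := ‹Nonempty ι›
  have hCcomp : IsCompact (⋂ i, E i) :=
    (hcomp i₀).of_isClosed_subset hCcl (iInter_subset E i₀)
  refine ⟨hCne, (isPreconnected_iff_subset_of_fully_disjoint_closed hCcl).mpr ?_⟩
  intro u v hu hv hsub huv
  have hAcomp : IsCompact ((⋂ i, E i) ∩ u) := hCcomp.inter_right hu
  have hBcomp : IsCompact ((⋂ i, E i) ∩ v) := hCcomp.inter_right hv
  have hAB : Disjoint ((⋂ i, E i) ∩ u) ((⋂ i, E i) ∩ v) :=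
    (huv.mono inter_subset_right inter_subset_right)
  obtain ⟨U, V, hUo, hVo, hAU, hBV, hUV⟩ := SeparatedNhds.of_isCompact_isCompact hAcomp hBcomp hAB
  have hCUV : (⋂ i, E i) ⊆ U ∪ V := by
    intro x hx
    rcases hsub hx with hxu | hxv
    · exact Or.inl (hAU ⟨hx, hxu⟩)
    · exact Or.inr (hBV ⟨hx, hxv⟩)
  -- find i with E i ⊆ U ∪ V
  have hexists : ∃ i, E i ⊆ U ∪ V := by
    by_contra h
    push_neg at h
    have hLne : ∀ i, (E i \ (U ∪ V)).Nonempty := by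
      intro i
      rcases not_subset.mp (h i) with ⟨x, hx, hx'⟩
      exact ⟨x, hx, hx'⟩
    have hLdir : Directed (· ⊇ ·) (fun i => E i \ (U ∪ V)) := by
      intro a b
      obtain ⟨c, hca, hcb⟩ := hdir a b
      exact ⟨c, diff_subset_diff_left hca, diff_subset_diff_left hcb⟩
    have hLcomp : ∀ i, IsCompact (E i \ (U ∪ V)) :=
      fun i => (hcomp i).diff (hUo.union hVo)
    have hLcl : ∀ i, IsClosed (E i \ (U ∪ V)) :=
      fun i => (hEcl i).sdiff (hUo.union hVo)
    obtain ⟨x, hx⟩ := IsCompact.nonempty_iInter_of_directed_nonempty_isCompact_isClosed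
      _ hLdir hLne hLcomp hLcl
    have hx1 : x ∈ ⋂ i, E i := mem_iInter.mpr fun i => (mem_iInter.mp hx i).1
    exact (mem_iInter.mp hx i₀).2 (hCUV hx1)
  obtain ⟨i, hi⟩ := hexists
  have hnot : ¬((E i ∩ U).Nonempty ∧ (E i ∩ V).Nonempty) := by
    rintro ⟨h1, h2⟩
    obtain ⟨x, hx⟩ := (hconn i).isPreconnected U V hUo hVo hi h1 h2
    exact (hUV.ne_of_mem hx.2.1 hx.2.2) rfl
  rcases not_and_or.mp hnot with hE | hE
  · -- E i ∩ U = ∅, so C ∩ u = ∅, hence C ⊆ v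
    right
    intro x hx
    rcases hsub hx with hxu | hxv
    · exact absurd ⟨x, (iInter_subset E i) hx, hAU ⟨hx, hxu⟩⟩ hE
    · exact hxv
  · left
    intro x hx
    rcases hsub hx with hxu | hxv
    · exact hxu
    · exact absurd ⟨x, (iInter_subset E i) hx, hBV ⟨hx, hxv⟩⟩ hE

/-- Structure of omega-limit sets of attracting neighborhoods. -/
lemma omega_aux {d : ℕ} (φ : ℝ → EuclideanSpace ℝ (Fin d) → EuclideanSpace ℝ (Fin d))
    (hφ : IsFlow φ) (S : Set (EuclideanSpace ℝ (Fin d)))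
    (hS : AttractingNbhd φ S) (hSne : S.Nonempty) :
    (omegaLimitSet φ S).Nonempty ∧ omegaLimitSet φ S ⊆ S ∧
      (IsConnected S → IsConnected (omegaLimitSet φ S)) := by
  obtain ⟨hScomp, τ, hτ, hattr⟩ := hS
  set Γ : ℝ → Set (EuclideanSpace ℝ (Fin d)) := fun t => ⋃ s ∈ Ici t, (φ s) '' S with hΓ
  have hΓanti : ∀ {a b : ℝ}, a ≤ b → Γ b ⊆ Γ a := by
    intro a b hab
    exact iUnion₂_mono' fun s hs => ⟨s, le_trans hab hs, subset_rfl⟩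
  set E : ℝ → Set (EuclideanSpace ℝ (Fin d)) := fun t => closure (Γ (max t τ)) with hE
  have hEanti : ∀ {a b : ℝ}, a ≤ b → E b ⊆ E a :=
    fun hab => closure_mono (hΓanti (max_le_max hab le_rfl))
  have hEsubS : ∀ t, E t ⊆ S := by
    intro t
    have h1 : Γ (max t τ) ⊆ S := iUnion₂_subset fun s hs =>
      (hattr s (le_trans (le_max_right _ _) hs)).trans interior_subset
    exact closure_minimal h1 hScomp.isClosed
  have hEcomp : ∀ t, IsCompact (E t) :=
    fun t => hScomp.of_isClosed_subset isClosed_closure (hEsubS t)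
  have hEne : ∀ t, (E t).Nonempty := by
    intro t
    obtain ⟨x, hx⟩ := hSne
    exact ⟨φ (max t τ) x,
      subset_closure (mem_biUnion self_mem_Ici (mem_image_of_mem _ hx))⟩
  have hEdir : Directed (· ⊇ ·) E :=
    fun a b => ⟨max a b, hEanti (le_max_left a b), hEanti (le_max_right a b)⟩
  have homega : omegaLimitSet φ S = ⋂ t, E t := by
    apply subset_antisymm
    · refine subset_iInter fun t => ?_
      exact iInter₂_subset (max t τ) (lt_of_lt_of_le hτ (le_max_right t τ))
    · refine subset_iInter₂ fun t _ => ?_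
      exact (iInter_subset E t).trans (closure_mono (hΓanti (le_max_left t τ)))
  rw [homega]
  refine ⟨IsCompact.nonempty_iInter_of_directed_nonempty_isCompact_isClosed E hEdir hEne hEcomp
      (fun t => isClosed_closure),
    (iInter_subset E 0).trans (hEsubS 0), fun hSconn => ?_⟩
  have hEconn : ∀ t, IsConnected (E t) := by
    intro t
    have h1 : IsConnected ((Ici (max t τ)) ×ˢ S) :=
      IsConnected.prod ⟨nonempty_Ici, isPreconnected_Ici⟩ hSconn
    have h2 : IsConnected (Function.uncurry φ '' ((Ici (max t τ)) ×ˢ S)) :=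
      h1.image _ hφ.1.continuousOn
    have h3 : Function.uncurry φ '' ((Ici (max t τ)) ×ˢ S) = Γ (max t τ) := by
      rw [show Function.uncurry φ = fun p : ℝ × EuclideanSpace ℝ (Fin d) => φ p.1 p.2 from rfl,
        Set.image_prod, ← Set.iUnion_image_left]
    rw [h3] at h2
    exact h2.closure
  exact isConnected_iInter_directed hEdir hEne hEcomp hEconn

lemma omegaLimitSet_isClosed {d : ℕ} (φ : ℝ → EuclideanSpace ℝ (Fin d) → EuclideanSpace ℝ (Fin d))
    (S : Set (EuclideanSpace ℝ (Fin d))) : IsClosed (omegaLimitSet φ S) :=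
  isClosed_biInter fun _ _ => isClosed_closure

lemma omegaLimitSet_mono {d : ℕ} (φ : ℝ → EuclideanSpace ℝ (Fin d) → EuclideanSpace ℝ (Fin d))
    {S T : Set (EuclideanSpace ℝ (Fin d))} (h : S ⊆ T) :
    omegaLimitSet φ S ⊆ omegaLimitSet φ T :=
  iInter₂_mono fun _ _ => closure_mono (iUnion₂_mono fun _ _ => image_mono h)

theorem stmt_15 {d : ℕ} (φ : ℝ → EuclideanSpace ℝ (Fin d) → EuclideanSpace ℝ (Fin d))
    (hφ : IsFlow φ) (X : Set (EuclideanSpace ℝ (Fin d))) (hXne : X.Nonempty)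
    (hXconn : IsConnected X) (hX : AttractingNbhd φ X)
    (K : ℕ) (hK : 1 ≤ K) (N : Fin (K + 1) → Set (EuclideanSpace ℝ (Fin d)))
    (hNne : ∀ k, (N k).Nonempty)
    (hNX : ∀ k, N k ⊆ X)
    (hdisj : ∀ j k, j ≠ k → Disjoint (N j) (N k))
    (hAN : ∀ k, AttractingNbhd φ (N k))
    (A : Fin (K + 1) → Set (EuclideanSpace ℝ (Fin d)))
    (hA : ∀ k, A k = omegaLimitSet φ (N k)) :
    omegaLimitSet φ X ≠ ⋃ k, A k ∧
      ∃ x ∈ omegaLimitSet φ X, ∀ k, x ∉ A k := by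
  have hAsubN : ∀ k, A k ⊆ N k := fun k => by
    rw [hA k]; exact (omega_aux φ hφ (N k) (hAN k) (hNne k)).2.1
  have hAne : ∀ k, (A k).Nonempty := fun k => by
    rw [hA k]; exact (omega_aux φ hφ (N k) (hAN k) (hNne k)).1
  have hAsubΩ : ∀ k, A k ⊆ omegaLimitSet φ X := fun k => by
    rw [hA k]; exact omegaLimitSet_mono φ (hNX k)
  have hAcl : ∀ k, IsClosed (A k) := fun k => by
    rw [hA k]; exact omegaLimitSet_isClosed φ (N k)
  have hAdisj : ∀ j k, j ≠ k → Disjoint (A j) (A k) := fun j k hjk =>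
    (hdisj j k hjk).mono (hAsubN j) (hAsubN k)
  have hΩconn : IsConnected (omegaLimitSet φ X) :=
    (omega_aux φ hφ X hX hXne).2.2 hXconn
  have hΩcl : IsClosed (omegaLimitSet φ X) := omegaLimitSet_isClosed φ X
  have k1 : Fin (K + 1) := ⟨1, by omega⟩
  have h01 : (0 : Fin (K + 1)) ≠ ⟨1, by omega⟩ := by
    simp [Fin.ext_iff]
  have key : ¬ (omegaLimitSet φ X ⊆ ⋃ k, A k) := by
    intro hsub
    have hcover : omegaLimitSet φ X ⊆ A 0 ∪ ⋃ k ∈ {k : Fin (K + 1) | k ≠ 0}, A k := by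
      intro x hx
      obtain ⟨k, hk⟩ := mem_iUnion.mp (hsub hx)
      by_cases h0 : k = 0
      · exact Or.inl (h0 ▸ hk)
      · exact Or.inr (mem_biUnion h0 hk)
    have hdisj' : Disjoint (A 0) (⋃ k ∈ {k : Fin (K + 1) | k ≠ 0}, A k) := by
      rw [Set.disjoint_left]
      intro x hx0 hxU
      obtain ⟨k, hk, hxk⟩ := mem_iUnion₂.mp hxU
      exact (hAdisj 0 k (Ne.symm hk)).ne_of_mem hx0 hxk rfl
    have hclU : IsClosed (⋃ k ∈ {k : Fin (K + 1) | k ≠ 0}, A k) :=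
      (Set.toFinite _).isClosed_biUnion fun k _ => hAcl k
    rcases (isPreconnected_iff_subset_of_fully_disjoint_closed hΩcl).mp
        hΩconn.isPreconnected (A 0) _ (hAcl 0) hclU hcover hdisj' with hc | hc
    · -- ω(X) ⊆ A 0, but A ⟨1,_⟩ ⊆ ω(X) and is disjoint from A 0
      obtain ⟨x, hx⟩ := hAne ⟨1, by omega⟩
      exact (hAdisj 0 ⟨1, by omega⟩ h01).ne_of_mem (hc (hAsubΩ _ hx)) hx rfl
    · -- ω(X) ⊆ ⋃_{k ≠ 0} A k, but A 0 ⊆ ω(X)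
      obtain ⟨x, hx⟩ := hAne 0
      obtain ⟨k, hk, hxk⟩ := mem_iUnion₂.mp (hc (hAsubΩ 0 hx))
      exact (hAdisj 0 k (Ne.symm hk)).ne_of_mem hx hxk rfl
  refine ⟨?_, ?_⟩
  · intro h
    exact key (h ▸ subset_rfl)
  · obtain ⟨x, hxΩ, hxA⟩ := not_subset.mp key
    exact ⟨x, hxΩ, fun k hk => hxA (mem_iUnion.mpr ⟨k, hk⟩)⟩
end
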